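/- Let q ∈ ℂ \ {0} with |q| ≠ 1, and let f, g be polynomials over ℂ that are relatively q-prime. Then gcd(f, D_q f) and gcd(g, D_q g) are relatively q-prime, and moreover gcd(f, D_q f) and gcd(g, D_q g) are relatively prime (share no common linear factor). -/

import Mathlib

open Polynomial

noncomputable section

/-- q-number [n]_q = 1 + q + ... + q^{n-1}. -/
def qNum (q : ℂ) (n : ℕ) : ℂ := ∑ i ∈ Finset.range n, q ^ i

/-- q-factorial. -/
def qFact (q : ℂ) (n : ℕ) : ℂ := ∏ i ∈ Finset.range n, qNum q (i + 1)

/-- q-binomial coefficient. -/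
def qBinom (q : ℂ) (k j : ℕ) : ℂ := qFact q k / (qFact q j * qFact q (k - j))

/-- q-derivative of a function. -/
def Dqf (q : ℂ) (f : ℂ → ℂ) : ℂ → ℂ := fun z => (f (q * z) - f z) / (q * z - z)

/-- q-analogue of the power (z-w)^n : [z-w]_q^n = (z-w)(z-qw)...(z-q^{n-1}w). -/
def qPow (q w : ℂ) (n : ℕ) : Polynomial ℂ := ∏ i ∈ Finset.range n, (X - C (q ^ i * w))

/-- q-derivative as a polynomial operation. -/
def qDeriv (q : ℂ) (f : Polynomial ℂ) : Polynomial ℂ :=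
  C (q - 1)⁻¹ * ((f.comp (C q * X) - f) /ₘ X)

/-- `w` is a zero of `f` with q-weight `n`. -/
def IsZeroQWeight (q : ℂ) (f : Polynomial ℂ) (w : ℂ) (n : ℕ) : Prop :=
  (w = 0 ∧ f ≠ 0 ∧ Polynomial.rootMultiplicity 0 f = n) ∨
  (w ≠ 0 ∧ (∀ k < n, f.eval (q ^ k * w) = 0) ∧ f.eval (q ^ n * w) ≠ 0)

/-- Canonical q-chain factorization of a polynomial. -/
structure QFactorization (q : ℂ) (P : Polynomial ℂ) where
  N : ℕ
  z : Fin N → ℂ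
  n : Fin N → ℕ
  A : ℂ
  A_ne : A ≠ 0
  n_pos : ∀ j, 1 ≤ n j
  eq : P = Polynomial.C A * ∏ j, qPow q (z j) (n j)
  deg_sum : ∑ j, n j = P.natDegree
  chain : ∀ j : Fin N,
    IsZeroQWeight q (∏ k ∈ Finset.univ.filter (fun k => j ≤ k), qPow q (z k) (n k)) (z j) (n j)
  maximal : ∀ j : Fin N, z j ≠ 0 →
    (∏ k ∈ Finset.univ.filter (fun k => j ≤ k), qPow q (z k) (n k)).eval (q⁻¹ * z j) ≠ 0

/-- q-difference radical associated to a canonical factorization. -/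
def radQ {q : ℂ} {P : Polynomial ℂ} (F : QFactorization q P) : Polynomial ℂ :=
  ∏ j, (X - C (F.z j))

local instance : DecidableEq (Polynomial ℂ) := Classical.decEq _

/-- Truncated q-radical of level μ. -/
def radTruncQ {q : ℂ} {P : Polynomial ℂ} (F : QFactorization q P) (μ : ℕ) : Polynomial ℂ :=
  EuclideanDomain.gcd (∏ j, qPow q (F.z j) (F.n j)) (∏ j, qPow q (F.z j) μ)

/-- f and g have a nonconstant common q-divisor. -/
def HasCommonQDivisor (q : ℂ) (f g : Polynomial ℂ) : Prop :=
  ∃ (z₀ z₁ z₂ : ℂ) (m n : ℕ) (F G : Polynomial ℂ), 1 ≤ m ∧ 1 ≤ n ∧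
    f = qPow q z₁ m * F ∧ g = qPow q z₂ n * G ∧ (z₀ = z₁ ∨ z₀ = z₂) ∧
    f * g = qPow q z₀ (m + n) * (F * G)

/-- q-shifted power [P]_q^n(z) = P(z)P(qz)...(P(q^{n-1}z)). -/
def qShiftPow (q : ℂ) (P : Polynomial ℂ) (n : ℕ) : Polynomial ℂ :=
  ∏ i ∈ Finset.range n, P.comp (C (q ^ i) * X)

/-- gcd of a list of polynomials. -/
def gcdList (l : List (Polynomial ℂ)) : Polynomial ℂ := l.foldr EuclideanDomain.gcd 0

/-!
A nonconstant common q-divisor exists exactly when a root `w` of one polynomial has `q * w` as a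
root of the other: such a pair gives the divisor `[z - w]_q^2 = (z - w)(z - q w)`, and conversely
cancelling `F * G` from a q-divisor leaves `[z - z₁]_q^m [z - z₂]_q^n = [z - z₁]_q^(m+n)`, which puts
`q^m z₁` on the q-chain of `z₂`. Roots of `gcd(f, D_q f)` are roots of `f`, whence the first claim.
A common root `w` of the two gcds is a root of `f` with `g(q w) = g(w) + (q - 1) w D_q g(w) = 0`,
whence the second.
-/

section

variable {q : ℂ}

lemma qPow_one (q w : ℂ) : qPow q w 1 = X - C w := by
  simp [qPow]

lemma qPow_add (q w : ℂ) (m n : ℕ) :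
    qPow q w (m + n) = qPow q w m * qPow q (q ^ m * w) n := by
  rw [qPow, Finset.prod_range_add]
  congr 1
  refine Finset.prod_congr rfl fun i _ => ?_
  rw [pow_add, mul_comm (q ^ m), mul_assoc]

lemma qPow_ne_zero (q w : ℂ) (n : ℕ) : qPow q w n ≠ 0 :=
  Finset.prod_ne_zero_iff.2 fun _ _ => X_sub_C_ne_zero _

lemma isRoot_qPow_iff {w x : ℂ} {n : ℕ} :
    (qPow q w n).IsRoot x ↔ ∃ i < n, x = q ^ i * w := by
  simp [qPow, IsRoot, eval_prod, Finset.prod_eq_zero_iff, sub_eq_zero]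

lemma isRoot_qPow {w : ℂ} {n i : ℕ} (hi : i < n) : (qPow q w n).IsRoot (q ^ i * w) :=
  isRoot_qPow_iff.2 ⟨i, hi, rfl⟩

lemma isRoot_qPow_self {w : ℂ} {n : ℕ} (hn : 0 < n) : (qPow q w n).IsRoot w := by
  simpa using isRoot_qPow (q := q) (w := w) hn

lemma HasCommonQDivisor.symm {f g : ℂ[X]} (h : HasCommonQDivisor q f g) :
    HasCommonQDivisor q g f := by
  obtain ⟨z₀, z₁, z₂, m, n, F, G, hm, hn, hf, hg, hz, hfg⟩ := h
  exact ⟨z₀, z₂, z₁, n, m, G, F, hn, hm, hg, hf, hz.symm, by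
    rw [mul_comm g, hfg, add_comm, mul_comm F]⟩

lemma hasCommonQDivisor_of_isRoot {f g : ℂ[X]} {w : ℂ} (hf : f.IsRoot w)
    (hg : g.IsRoot (q * w)) : HasCommonQDivisor q f g := by
  obtain ⟨F, rfl⟩ := dvd_iff_isRoot.2 hf
  obtain ⟨G, rfl⟩ := dvd_iff_isRoot.2 hg
  refine ⟨w, w, q * w, 1, 1, F, G, le_rfl, le_rfl, by rw [qPow_one], by rw [qPow_one],
    Or.inl rfl, ?_⟩
  rw [qPow_add, qPow_one, qPow_one, pow_one]
  ring

lemma exists_qLinked_roots_of_qPow_mul {f g F G : ℂ[X]} {z₁ z₂ : ℂ} {m n : ℕ} (hm : 1 ≤ m)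
    (hn : 1 ≤ n) (hf : f = qPow q z₁ m * F) (hg : g = qPow q z₂ n * G)
    (hfg : f * g = qPow q z₁ (m + n) * (F * G)) :
    ∃ w, (f.IsRoot w ∧ g.IsRoot (q * w)) ∨ (g.IsRoot w ∧ f.IsRoot (q * w)) := by
  subst hf hg
  by_cases hF : F = 0
  · exact ⟨z₂, Or.inr ⟨(isRoot_qPow_self hn).dvd (dvd_mul_right _ G), by simp [hF]⟩⟩
  by_cases hG : G = 0
  · exact ⟨z₁, Or.inl ⟨(isRoot_qPow_self hm).dvd (dvd_mul_right _ F), by simp [hG]⟩⟩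
  have hchain : qPow q z₂ n = qPow q (q ^ m * z₁) n := by
    refine mul_left_cancel₀ (qPow_ne_zero q z₁ m) (mul_right_cancel₀ (mul_ne_zero hF hG) ?_)
    rw [← qPow_add, ← hfg]
    ring
  obtain ⟨j, hj, hlink⟩ : ∃ j < n, q ^ m * z₁ = q ^ j * z₂ :=
    isRoot_qPow_iff.1 (hchain ▸ isRoot_qPow_self hn)
  have hqw : q * (q ^ (m - 1) * z₁) = q ^ j * z₂ := by
    rw [← mul_assoc, ← pow_succ', Nat.sub_add_cancel hm, hlink]
  refine ⟨q ^ (m - 1) * z₁, Or.inl ⟨(isRoot_qPow (by omega)).dvd (dvd_mul_right _ F), ?_⟩⟩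
  exact hqw ▸ (isRoot_qPow hj).dvd (dvd_mul_right _ G)

lemma hasCommonQDivisor_iff {f g : ℂ[X]} : HasCommonQDivisor q f g ↔
    ∃ w, (f.IsRoot w ∧ g.IsRoot (q * w)) ∨ (g.IsRoot w ∧ f.IsRoot (q * w)) := by
  constructor
  · rintro ⟨z₀, z₁, z₂, m, n, F, G, hm, hn, hf, hg, rfl | rfl, hfg⟩
    · exact exists_qLinked_roots_of_qPow_mul hm hn hf hg hfg
    · obtain ⟨w, hw⟩ := exists_qLinked_roots_of_qPow_mul hn hm hg hf
        (by rw [mul_comm g, hfg, add_comm, mul_comm F])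
      exact ⟨w, hw.symm⟩
  · rintro ⟨w, ⟨hf, hg⟩ | ⟨hg, hf⟩⟩
    · exact hasCommonQDivisor_of_isRoot hf hg
    · exact (hasCommonQDivisor_of_isRoot hg hf).symm

lemma HasCommonQDivisor.of_dvd {f g f' g' : ℂ[X]} (h : HasCommonQDivisor q f' g')
    (hf : f' ∣ f) (hg : g' ∣ g) : HasCommonQDivisor q f g := by
  rw [hasCommonQDivisor_iff] at h ⊢
  obtain ⟨w, hw⟩ := h
  exact ⟨w, hw.imp (And.imp (·.dvd hf) (·.dvd hg)) (And.imp (·.dvd hg) (·.dvd hf))⟩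

lemma eval_mul_of_isRoot_qDeriv (hq : q ≠ 1) {f : ℂ[X]} {w : ℂ} (hw : (qDeriv q f).IsRoot w) :
    f.eval (q * w) = f.eval w := by
  set P := f.comp (C q * X) - f
  have hP : (X - C 0) * (P /ₘ (X - C 0)) = P :=
    mul_divByMonic_eq_iff_isRoot.2 (by simp [P])
  rw [C_0, sub_zero] at hP
  have hQ : (P /ₘ X).eval w = 0 := by
    simpa [qDeriv, IsRoot, sub_eq_zero, hq] using hw
  have hPw : P.eval w = 0 := by
    rw [← hP, eval_mul, hQ, mul_zero]
  simpa [P, sub_eq_zero] using hPw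

lemma isCoprime_gcd_qDeriv_right (hq : q ≠ 1) {f g : ℂ[X]} (h : ¬ HasCommonQDivisor q f g) :
    IsCoprime f (EuclideanDomain.gcd g (qDeriv q g)) := by
  rw [isCoprime_iff_aeval_ne_zero_of_isAlgClosed ℂ (k := ℂ)]
  intro w
  by_contra! hw
  simp only [coe_aeval_eq_eval] at hw
  have hg : g.IsRoot w := IsRoot.dvd hw.2 (EuclideanDomain.gcd_dvd_left _ _)
  have hdg : (qDeriv q g).IsRoot w := IsRoot.dvd hw.2 (EuclideanDomain.gcd_dvd_right _ _)
  exact h (hasCommonQDivisor_of_isRoot hw.1 ((eval_mul_of_isRoot_qDeriv hq hdg).trans hg))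

end

theorem gcd_qDeriv_relPrime_general (q : ℂ) (habs : ‖q‖ ≠ 1)
    (f g : Polynomial ℂ) (h : ¬ HasCommonQDivisor q f g) :
    ¬ HasCommonQDivisor q (EuclideanDomain.gcd f (qDeriv q f))
        (EuclideanDomain.gcd g (qDeriv q g)) ∧
      IsCoprime (EuclideanDomain.gcd f (qDeriv q f)) (EuclideanDomain.gcd g (qDeriv q g)) := by
  have hq : q ≠ 1 := by
    rintro rfl
    exact habs norm_one
  refine ⟨fun hd => h (hd.of_dvd (EuclideanDomain.gcd_dvd_left _ _)
    (EuclideanDomain.gcd_dvd_left _ _)), ?_⟩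
  exact (isCoprime_gcd_qDeriv_right hq h).of_isCoprime_of_dvd_left
    (EuclideanDomain.gcd_dvd_left _ _)

/-- gcd(f, D_q f) and gcd(g, D_q g) inherit relative q-primeness, and they are coprime. -/
theorem gcd_qDeriv_relPrime (q : ℂ) (hq0 : q ≠ 0) (habs : ‖q‖ ≠ 1)
    (f g : Polynomial ℂ) (h : ¬ HasCommonQDivisor q f g) :
    ¬ HasCommonQDivisor q (EuclideanDomain.gcd f (qDeriv q f))
        (EuclideanDomain.gcd g (qDeriv q g)) ∧
      IsCoprime (EuclideanDomain.gcd f (qDeriv q f)) (EuclideanDomain.gcd g (qDeriv q g)) :=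
  gcd_qDeriv_relPrime_general q habs f g h
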